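/- arXiv:2007.01337 — 4 statements merged into one kernel-verified Lean document; each statement's English description precedes it below -/
import Mathlib

section
/- A vertex v of the Hamming graph resolves two distinct strings x and y if and only if ⟨V, X - Y⟩ ≠ 0, where V, X, Y are the vectorized one-hot encodings of v, x, y respectively. Equivalently, d(v,x) = d(v,y) iff ⟨V, X⟩ = ⟨V, Y⟩. -/
/-!
Coordinate `j` contributes `∑ᵢ [v j = i][x j = i] = [v j = x j]` to `⟨V, X⟩`, so `⟨V, X⟩` counts
the coordinates where `v` and `x` agree, i.e. `⟨V, X⟩ = k - d(v, x)`. Hence `⟨V, X⟩ = ⟨V, Y⟩` iff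
`d(v, x) = d(v, y)`, and `⟨V, X - Y⟩ = ⟨V, X⟩ - ⟨V, Y⟩`.
-/

open Finset

section OneHot

variable {ι α : Type*} [Fintype ι] [Fintype α] [DecidableEq α]

def oneHot (s : ι → α) : α × ι → ℤ := fun p => if s p.2 = p.1 then 1 else 0

theorem sum_oneHot_mul_oneHot (v x : ι → α) :
    ∑ p, oneHot v p * oneHot x p = Fintype.card ι - hammingDist v x := by
  have agree : ∀ j, ∑ i, oneHot v (i, j) * oneHot x (i, j) = if v j = x j then 1 else 0 := by
    intro j
    simp [oneHot, eq_comm]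
  have split := card_filter_add_card_filter_not (s := univ) (fun j => v j = x j)
  rw [Fintype.sum_prod_type, Finset.sum_comm]
  simp only [agree, sum_boole, card_univ] at split ⊢
  rw [hammingDist, ← split]
  push_cast
  ring

end OneHot

theorem resolve_iff_inner_general (k m : ℕ) (v x y : Fin k → Fin m)
    (V X Y : Fin m × Fin k → ℤ)
    (hV : ∀ p, V p = if v p.2 = p.1 then 1 else 0)
    (hX : ∀ p, X p = if x p.2 = p.1 then 1 else 0)
    (hY : ∀ p, Y p = if y p.2 = p.1 then 1 else 0) :
    (hammingDist v x ≠ hammingDist v y ↔ ∑ p, V p * (X p - Y p) ≠ 0) ∧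
    (hammingDist v x = hammingDist v y ↔ ∑ p, V p * X p = ∑ p, V p * Y p) := by
  obtain rfl : V = oneHot v := funext hV
  obtain rfl : X = oneHot x := funext hX
  obtain rfl : Y = oneHot y := funext hY
  have inner_eq_iff : hammingDist v x = hammingDist v y ↔
      ∑ p, oneHot v p * oneHot x p = ∑ p, oneHot v p * oneHot y p := by
    rw [sum_oneHot_mul_oneHot, sum_oneHot_mul_oneHot, sub_right_inj, Nat.cast_inj]
  refine ⟨?_, inner_eq_iff⟩
  simp only [mul_sub, sum_sub_distrib, ne_eq, sub_eq_zero, inner_eq_iff]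

theorem resolve_iff_inner (k m : ℕ) (v x y : Fin k → Fin m) (hxy : x ≠ y)
    (V X Y : Fin m × Fin k → ℤ)
    (hV : ∀ p, V p = if v p.2 = p.1 then 1 else 0)
    (hX : ∀ p, X p = if x p.2 = p.1 then 1 else 0)
    (hY : ∀ p, Y p = if y p.2 = p.1 then 1 else 0) :
    (hammingDist v x ≠ hammingDist v y ↔ ∑ p, V p * (X p - Y p) ≠ 0) ∧
    (hammingDist v x = hammingDist v y ↔ ∑ p, V p * X p = ∑ p, V p * Y p) :=
  resolve_iff_inner_general k m v x y V X Y hV hX hY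
end

section
/- A vector z : Fin m → ℤ (with m ≥ 3) satisfies the three conditions (i) Σᵢ zᵢ = 0 together with zᵢ(zᵢ-1)(zᵢ+1)=0 for all i ≥ 1, (ii) zᵢzⱼ(zᵢ+zⱼ) = 0 for all 1 ≤ i < j, and (iii) zᵢzⱼz_l = 0 for all 1 ≤ i < j < l, if and only if z is either the zero vector or has exactly one entry equal to 1, one entry equal to -1, and all other entries 0. -/
/-!
Off the pinned coordinate `0`, condition (i) forces entries in `{-1, 0, 1}` and condition (ii)
forces any two nonzero entries to be opposite. Three pairwise opposite nonzero integers cannot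
exist, so at most two entries off `0` are nonzero, and the zero sum then determines the entry at
`0`.
-/

open Finset

section Ring

variable {R : Type*} [CommRing R] [NoZeroDivisors R] {a b : R}

theorem eq_one_or_eq_neg_one_of_mul_sub_one_mul_add_one_eq_zero
    (h : a * (a - 1) * (a + 1) = 0) (ha : a ≠ 0) : a = 1 ∨ a = -1 := by
  simpa [ha, sub_eq_zero, add_eq_zero_iff_eq_neg] using h

theorem add_eq_zero_of_mul_mul_add_eq_zero (h : a * b * (a + b) = 0) (ha : a ≠ 0) (hb : b ≠ 0) :
    a + b = 0 := by
  simpa [ha, hb] using h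

end Ring

variable {ι : Type*}

theorem Finset.card_le_two_of_add_eq_zero {s : Finset ι} {z : ι → ℤ} (hne : ∀ i ∈ s, z i ≠ 0)
    (hadd : ∀ i ∈ s, ∀ j ∈ s, i ≠ j → z i + z j = 0) : #s ≤ 2 := by
  by_contra! h
  obtain ⟨a, ha, b, hb, c, hc, hab, hac, hbc⟩ := two_lt_card.1 h
  have hab' := hadd a ha b hb hab
  have hac' := hadd a ha c hc hac
  have hbc' := hadd b hb c hc hbc
  exact hne a ha (by linarith)

/-- `z = e p - e q`, the difference of two distinct one-hot vectors. -/
def IsOneHotDiff (z : ι → ℤ) (p q : ι) : Prop :=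
  p ≠ q ∧ z p = 1 ∧ z q = -1 ∧ ∀ r, r ≠ p → r ≠ q → z r = 0

namespace IsOneHotDiff

variable {z : ι → ℤ} {p q : ι}

theorem eq_zero_or_eq_or_eq (h : IsOneHotDiff z p q) (r : ι) : z r = 0 ∨ r = p ∨ r = q := by
  by_contra! hr
  exact hr.1 (h.2.2.2 r hr.2.1 hr.2.2)

theorem sum_eq_zero [Fintype ι] (h : IsOneHotDiff z p q) : ∑ i, z i = 0 := by
  obtain ⟨hpq, hp, hq, hr⟩ := h
  rw [Fintype.sum_eq_add p q hpq fun r hr' => hr r hr'.1 hr'.2, hp, hq]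
  norm_num

theorem mul_sub_one_mul_add_one_eq_zero (h : IsOneHotDiff z p q) (i : ι) :
    z i * (z i - 1) * (z i + 1) = 0 := by
  rcases h.eq_zero_or_eq_or_eq i with hi | rfl | rfl <;> simp [h.2.1, h.2.2.1, *]

theorem mul_mul_add_eq_zero (h : IsOneHotDiff z p q) {i j : ι} (hij : i ≠ j) :
    z i * z j * (z i + z j) = 0 := by
  rcases h.eq_zero_or_eq_or_eq i with hi | rfl | rfl <;>
    rcases h.eq_zero_or_eq_or_eq j with hj | rfl | rfl <;> simp [h.2.1, h.2.2.1, *] at *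

theorem mul_mul_eq_zero (h : IsOneHotDiff z p q) {i j l : ι} (hij : i ≠ j) (hjl : j ≠ l)
    (hil : i ≠ l) : z i * z j * z l = 0 := by
  rcases h.eq_zero_or_eq_or_eq i with hi | rfl | rfl <;>
    rcases h.eq_zero_or_eq_or_eq j with hj | rfl | rfl <;>
    rcases h.eq_zero_or_eq_or_eq l with hl | rfl | rfl <;> simp_all

end IsOneHotDiff

theorem exists_isOneHotDiff_of_add_eq_zero {z : ι → ℤ} {a b : ι} (hab : a ≠ b)
    (ha : z a = 1 ∨ z a = -1) (hsum : z a + z b = 0) (hr : ∀ r, r ≠ a → r ≠ b → z r = 0) :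
    ∃ p q, IsOneHotDiff z p q := by
  rcases ha with ha | ha
  · exact ⟨a, b, hab, ha, by linarith, hr⟩
  · exact ⟨b, a, hab.symm, by linarith, ha, fun r hrb hra => hr r hra hrb⟩

theorem eq_zero_or_exists_isOneHotDiff [Fintype ι] [DecidableEq ι] {z : ι → ℤ} (i₀ : ι)
    (hsum : ∑ i, z i = 0) (hcube : ∀ i ≠ i₀, z i * (z i - 1) * (z i + 1) = 0)
    (hpair : ∀ i j, i ≠ i₀ → j ≠ i₀ → i ≠ j → z i * z j * (z i + z j) = 0) :
    z = 0 ∨ ∃ p q, IsOneHotDiff z p q := by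
  let S := (univ.erase i₀).filter (z · ≠ 0)
  have hmem : ∀ i, i ∈ S ↔ i ≠ i₀ ∧ z i ≠ 0 := by simp [S]
  have hoff : ∀ i ≠ i₀, i ∉ S → z i = 0 := fun i hi hiS => by simpa [hmem, hi] using hiS
  have hsumS : z i₀ + ∑ i ∈ S, z i = 0 := by
    rwa [sum_filter_ne_zero, add_sum_erase _ _ (mem_univ i₀)]
  have hcard : #S ≤ 2 := card_le_two_of_add_eq_zero (fun i hi => ((hmem i).1 hi).2)
    fun i hi j hj hij => add_eq_zero_of_mul_mul_add_eq_zero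
      (hpair i j ((hmem i).1 hi).1 ((hmem j).1 hj).1 hij) ((hmem i).1 hi).2 ((hmem j).1 hj).2
  obtain hS | ⟨a, hS⟩ | ⟨a, b, hab, hS⟩ : S = ∅ ∨ (∃ a, S = {a}) ∨ ∃ a b, a ≠ b ∧ S = {a, b} := by
    rw [← card_eq_zero, ← card_eq_one, ← card_eq_two]
    omega
  · left
    funext i
    rcases eq_or_ne i i₀ with rfl | hi
    · simpa [hS] using hsumS
    · exact hoff i hi (by simp [hS])
  · obtain ⟨ha₀, ha⟩ := (hmem a).1 (by simp [hS])
    right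
    refine exists_isOneHotDiff_of_add_eq_zero ha₀
      (eq_one_or_eq_neg_one_of_mul_sub_one_mul_add_one_eq_zero (hcube a ha₀) ha) ?_
      fun r hra hr₀ => hoff r hr₀ (by simp [hS, hra])
    simp only [hS, sum_singleton] at hsumS
    linarith
  · obtain ⟨ha₀, ha⟩ := (hmem a).1 (by simp [hS])
    obtain ⟨hb₀, hb⟩ := (hmem b).1 (by simp [hS])
    have hab' : z a + z b = 0 := add_eq_zero_of_mul_mul_add_eq_zero (hpair a b ha₀ hb₀ hab) ha hb
    have hi₀ : z i₀ = 0 := by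
      rw [hS, sum_pair hab] at hsumS
      linarith
    right
    refine exists_isOneHotDiff_of_add_eq_zero hab
      (eq_one_or_eq_neg_one_of_mul_sub_one_mul_add_one_eq_zero (hcube a ha₀) ha) hab' fun r hra hrb => ?_
    rcases eq_or_ne r i₀ with rfl | hr₀
    · exact hi₀
    · exact hoff r hr₀ (by simp [hS, hra, hrb])

theorem groebner_basis_block_characterization_general (m : ℕ) (z : Fin m → ℤ) :
    ((∑ i, z i = 0) ∧
      (∀ i : Fin m, 1 ≤ (i : ℕ) → z i * (z i - 1) * (z i + 1) = 0) ∧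
      (∀ i j : Fin m, 1 ≤ (i : ℕ) → i < j → z i * z j * (z i + z j) = 0) ∧
      (∀ i j l : Fin m, 1 ≤ (i : ℕ) → i < j → j < l → z i * z j * z l = 0)) ↔
    (z = 0 ∨ ∃ p q : Fin m, p ≠ q ∧ z p = 1 ∧ z q = -1 ∧
      ∀ r, r ≠ p → r ≠ q → z r = 0) := by
  constructor
  · rintro ⟨hsum, hcube, hpair, -⟩
    cases m with
    | zero => exact Or.inl (funext fun i => i.elim0)
    | succ m =>
      have hpos : ∀ i : Fin (m + 1), i ≠ 0 → 1 ≤ (i : ℕ) := fun i hi =>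
        Nat.one_le_iff_ne_zero.2 (Fin.val_ne_zero_iff.2 hi)
      refine eq_zero_or_exists_isOneHotDiff 0 hsum (fun i hi => hcube i (hpos i hi))
        fun i j hi hj hij => ?_
      rcases hij.lt_or_gt with h | h
      · exact hpair i j (hpos i hi) h
      · linear_combination hpair j i (hpos j hj) h
  · rintro (rfl | ⟨p, q, h : IsOneHotDiff z p q⟩)
    · simp
    · exact ⟨h.sum_eq_zero, fun i _ => h.mul_sub_one_mul_add_one_eq_zero i,
        fun i j _ hij => h.mul_mul_add_eq_zero hij.ne,
        fun i j l _ hij hjl => h.mul_mul_eq_zero hij.ne hjl.ne (hij.trans hjl).ne⟩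

theorem groebner_basis_block_characterization (m : ℕ) (hm : 3 ≤ m) (z : Fin m → ℤ) :
    ((∑ i, z i = 0) ∧
      (∀ i : Fin m, 1 ≤ (i : ℕ) → z i * (z i - 1) * (z i + 1) = 0) ∧
      (∀ i j : Fin m, 1 ≤ (i : ℕ) → i < j → z i * z j * (z i + z j) = 0) ∧
      (∀ i j l : Fin m, 1 ≤ (i : ℕ) → i < j → j < l → z i * z j * z l = 0)) ↔
    (z = 0 ∨ ∃ p q : Fin m, p ≠ q ∧ z p = 1 ∧ z q = -1 ∧
      ∀ r, r ≠ p → r ≠ q → z r = 0) :=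
  groebner_basis_block_characterization_general m z
end

section
/- Let R = {v₁,…,vₙ} ⊆ {0,1}^k and let B be the n×k integer matrix whose i-th row is vᵢ - v̄ᵢ (entrywise difference of vᵢ and its bitwise negation, i.e. the vector with entries 2vᵢ[j] - 1 ∈ {-1,1}). Then R is a resolving set of the hypercube H(k,2) if and only if the only z ∈ {-1,0,1}^k with Bz = 0 is z = 0. -/
/-!
Coordinatewise, `|a - y| - |a - x| = (2a - 1)(x - y)` for bits `a, x, y`, so the change of the
distance to `vᵢ` between `x` and `y` is the `i`-th entry of `B (x - y)`. As `(x, y)` ranges over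
pairs of binary vectors, `x - y` ranges over all of `{-1, 0, 1}^k` and vanishes exactly when
`x = y`; hence `R` fails to resolve some pair iff `B` has a nonzero kernel vector in `{-1, 0, 1}^k`.
-/

namespace Hypercube

variable {ι : Type*}

def signedDiff (x y : ι → Fin 2) : ι → ℤ := fun j => (x j : ℤ) - y j

lemma signedDiff_mem (x y : ι → Fin 2) (j : ι) :
    signedDiff x y j = -1 ∨ signedDiff x y j = 0 ∨ signedDiff x y j = 1 := by
  unfold signedDiff
  generalize x j = b, y j = c
  fin_cases b <;> fin_cases c <;> simp

lemma signedDiff_eq_zero_iff {x y : ι → Fin 2} : signedDiff x y = 0 ↔ x = y := by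
  simp only [funext_iff, signedDiff, Pi.zero_apply, sub_eq_zero, Nat.cast_inj, Fin.val_inj]

lemma exists_signedDiff_eq (z : ι → ℤ) (hz : ∀ j, z j = -1 ∨ z j = 0 ∨ z j = 1) :
    ∃ x y : ι → Fin 2, signedDiff x y = z := by
  refine ⟨fun j => if z j = 1 then 1 else 0, fun j => if z j = -1 then 1 else 0, funext fun j => ?_⟩
  rcases hz j with h | h | h <;> simp [signedDiff, h]

lemma hammingDist_sub_hammingDist [Fintype ι] (a x y : ι → Fin 2) :
    (hammingDist a y : ℤ) - hammingDist a x = ∑ j, (2 * (a j : ℤ) - 1) * signedDiff x y j := by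
  simp only [hammingDist, Finset.card_filter, Nat.cast_sum, ← Finset.sum_sub_distrib]
  refine Finset.sum_congr rfl fun j _ => ?_
  unfold signedDiff
  generalize a j = b, x j = c, y j = d
  fin_cases b <;> fin_cases c <;> fin_cases d <;> simp

end Hypercube

open Hypercube in
theorem hypercube_resolving_iff (k n : ℕ) (v : Fin n → (Fin k → Fin 2))
    (B : Matrix (Fin n) (Fin k) ℤ)
    (hB : ∀ i j, B i j = 2 * (v i j : ℤ) - 1) :
    (∀ x y : Fin k → Fin 2, x ≠ y → ∃ i, hammingDist (v i) x ≠ hammingDist (v i) y) ↔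
    (∀ z : Fin k → ℤ, (∀ j, z j = -1 ∨ z j = 0 ∨ z j = 1) →
      (∀ i, ∑ j, B i j * z j = 0) → z = 0) := by
  have hdist : ∀ i x y, ∑ j, B i j * signedDiff x y j
      = (hammingDist (v i) y : ℤ) - hammingDist (v i) x := by
    simp only [hB, hammingDist_sub_hammingDist, implies_true]
  constructor
  · intro hres z hz hBz
    obtain ⟨x, y, rfl⟩ := exists_signedDiff_eq z hz
    by_contra hne
    obtain ⟨i, hi⟩ := hres x y (mt signedDiff_eq_zero_iff.2 hne)
    have := hdist i x y
    rw [hBz i] at this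
    omega
  · intro hker x y hxy
    by_contra! hsame
    refine hxy (signedDiff_eq_zero_iff.1 (hker _ (signedDiff_mem x y) fun i => ?_))
    rw [hdist, hsame i, sub_self]
end

section
/- For a set R of binary strings of length k, R is resolving in H(k,2) if and only if the map sending each vertex x ∈ {0,1}^k to the real vector (⟨r - r̄, x⟩)_{r ∈ R} is injective, where r̄ is the bitwise complement of r. -/
section HammingBinary

variable {ι : Type*} [Fintype ι]

lemma Fin.two_ite_ne_eq (a b : Fin 2) :
    (if a ≠ b then 1 else 0 : ℝ) = a + b - 2 * a * b := by
  fin_cases a <;> fin_cases b <;> norm_num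

lemma hammingDist_eq_sum_sub_sum_mul (r x : ι → Fin 2) :
    (hammingDist r x : ℝ) = ∑ j, (r j : ℝ) - ∑ j, ((r j : ℝ) - (1 - (r j : ℝ))) * (x j : ℝ) := by
  rw [hammingDist, Finset.card_filter, Nat.cast_sum, ← Finset.sum_sub_distrib]
  refine Finset.sum_congr rfl fun j _ => ?_
  rw [Nat.cast_ite, Nat.cast_one, Nat.cast_zero, Fin.two_ite_ne_eq]
  ring

lemma hammingDist_eq_iff_sum_mul_eq (r x y : ι → Fin 2) :
    hammingDist r x = hammingDist r y ↔
      ∑ j, ((r j : ℝ) - (1 - (r j : ℝ))) * (x j : ℝ) =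
        ∑ j, ((r j : ℝ) - (1 - (r j : ℝ))) * (y j : ℝ) := by
  rw [← Nat.cast_inj (R := ℝ), hammingDist_eq_sum_sub_sum_mul, hammingDist_eq_sum_sub_sum_mul,
    sub_right_inj]

end HammingBinary

theorem resolving_iff_injective_linear (k : ℕ) (R : Set (Fin k → Fin 2)) :
    (∀ x y : Fin k → Fin 2, x ≠ y → ∃ r ∈ R, hammingDist r x ≠ hammingDist r y) ↔
    Function.Injective (fun x : Fin k → Fin 2 =>
      fun r : R => ∑ j, ((r.1 j : ℝ) - (1 - (r.1 j : ℝ))) * (x j : ℝ)) := by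
  constructor
  · intro hres x y hxy
    by_contra hne
    obtain ⟨r, hr, hdist⟩ := hres x y hne
    exact hdist ((hammingDist_eq_iff_sum_mul_eq r x y).2 (congrFun hxy ⟨r, hr⟩))
  · intro hinj x y hne
    by_contra! hdist
    exact hne (hinj (funext fun r => (hammingDist_eq_iff_sum_mul_eq r.1 x y).1 (hdist r r.2)))
end
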